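/- arXiv:2106.15886 — 3 statements merged into one kernel-verified Lean document; each statement's English description precedes it below -/
import Mathlib

section
/- Let s : ℤ → Σ be a balanced sequence and n₀ ∈ ℤ, and let σ^{n₀}s denote the shifted sequence with (σ^{n₀}s)_m = s_{m+n₀}. Then σ^{n₀}s admits a factorization σ^{n₀}s = p̃·xy·p with {x, y} = {a, b} if and only if there exists a sequence (α_k)_{k≥0} of irrational numbers α_k ∈ [0,1] such that σ^{n₀}s = lim_{k→∞} s_{α_k,0} or σ^{n₀}s = lim_{k→∞} s'_{α_k,0}, where the limits are pointwise (in the prodiscrete topology on Σ^ℤ). -/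
/-! If `s₋₁s₀ = ba` (otherwise pass to the complement, which exchanges `s_{α,0}` and `s'_{1-α,0}`),
let `f n` be the number of `b`s in `s₀ ⋯ sₙ₋₁`. By the symmetry `sₙ = s₋ₙ₋₁`, the factor
`s₋ₙ ⋯ s₋₁` contains `f n + 1` letters `b`, so balance forces every factor of length `n` to contain
`f n` or `f n + 1` of them. Hence `f` is superadditive and `f + 1` subadditive, which gives
`f n / n < (f m + 1) / m` for all `n, m ≥ 1`, and for every `N` there is an irrational `α` with
`⌊α n⌋ = f n` for `n ≤ N + 1`. Then `s_{α,0}` agrees with `s` on `[0, N]`, and since both have a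
central factorization, on `[-N-1, N]`. Conversely, `s_{α,0}` has a central factorization for
irrational `α` because `⌊-x⌋ = -⌊x⌋ - 1` for irrational `x`, and this property passes to pointwise
limits. -/

/-- The letter `a` is encoded by `false`, the letter `b` by `true`.
`u` is a factor of the biinfinite sequence `s`. -/
def IsFactor (s : ℤ → Bool) (u : List Bool) : Prop :=
  ∃ k : ℤ, u = (List.range u.length).map fun i => s (k + i)

/-- `s` is balanced: any two factors of the same length have numbers of
occurrences of each letter differing by at most 1. -/
def IsBalanced (s : ℤ → Bool) : Prop :=
  ∀ u v : List Bool, IsFactor s u → IsFactor s v → u.length = v.length →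
    ∀ c : Bool, |(u.count c : ℤ) - (v.count c : ℤ)| ≤ 1

/-- A biinfinite sequence `s` admits a factorization `s = p̃·xy·p` with
`{x, y} = {a, b}` iff `s (-1) ≠ s 0` and `s n = s (-n - 1)` for all
`n ∈ ℤ ∖ {-1, 0}`. -/
def HasCentralFactorization (s : ℤ → Bool) : Prop :=
  s (-1) ≠ s 0 ∧ ∀ n : ℤ, n ≠ -1 → n ≠ 0 → s n = s (-n - 1)

/-- The lower mechanical sequence `s_{α,0}` with slope `α` and intercept `0`;
the value `0` is the letter `a = false` and the value `1` is `b = true`. -/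
noncomputable def lowerMech (α : ℝ) (n : ℤ) : Bool :=
  if ⌊α * (n + 1)⌋ - ⌊α * n⌋ = 1 then true else false

/-- The upper mechanical sequence `s'_{α,0}` with slope `α` and intercept `0`. -/
noncomputable def upperMech (α : ℝ) (n : ℤ) : Bool :=
  if ⌈α * (n + 1)⌉ - ⌈α * n⌉ = 1 then true else false

/-- `t` is the pointwise limit of the sequence of sequences `u k` (which is
exactly convergence in the prodiscrete topology on `Bool ^ ℤ`). -/
def PointwiseLimit (u : ℕ → ℤ → Bool) (t : ℤ → Bool) : Prop :=
  ∀ m : ℤ, ∀ᶠ k in Filter.atTop, u k m = t m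

def window (g : ℤ → Bool) (k : ℤ) (n : ℕ) : List Bool :=
  (List.range n).map fun i : ℕ => g (k + i)

def windowCount (g : ℤ → Bool) (k : ℤ) (n : ℕ) : ℤ :=
  ∑ i ∈ Finset.range n, ((g (k + i)).toNat : ℤ)

lemma isFactor_window (g : ℤ → Bool) (k : ℤ) (n : ℕ) : IsFactor g (window g k n) := by
  -- in `IsFactor` the index list `List.range u.length` is coerced to `List ℤ` through a `do` block
  have hcast : (do let a ← List.range n; pure (a : ℤ) : List ℤ) = (List.range n).map Nat.cast :=
    List.flatMap_pure_eq_map _ _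
  exact ⟨k, by simp only [window, List.length_map, List.length_range, hcast, List.map_map]; rfl⟩

lemma windowCount_add (g : ℤ → Bool) (k : ℤ) (n m : ℕ) :
    windowCount g k (n + m) = windowCount g k n + windowCount g (k + n) m := by
  simp only [windowCount, Finset.sum_range_add, Nat.cast_add, add_assoc]

lemma windowCount_one (g : ℤ → Bool) (k : ℤ) : windowCount g k 1 = (g k).toNat := by
  simp [windowCount]

lemma count_window (g : ℤ → Bool) (k : ℤ) (n : ℕ) :
    ((window g k n).count true : ℤ) = windowCount g k n := by
  induction n with
  | zero => simp [window, windowCount]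
  | succ n ih =>
    rw [windowCount_add, windowCount_one, ← ih]
    cases h : g (k + n) <;> simp [window, List.range_succ, h]

lemma IsBalanced.abs_windowCount_sub_le {g : ℤ → Bool} (hg : IsBalanced g) (k k' : ℤ) (n : ℕ) :
    |windowCount g k n - windowCount g k' n| ≤ 1 := by
  simpa only [count_window] using
    hg _ _ (isFactor_window g k n) (isFactor_window g k' n) (by simp [window]) true

lemma IsBalanced.comp_add_right {g : ℤ → Bool} (hg : IsBalanced g) (n₀ : ℤ) :
    IsBalanced fun m => g (m + n₀) := by
  have hfac : ∀ u, IsFactor (fun m => g (m + n₀)) u → IsFactor g u := by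
    rintro u ⟨k, hk⟩
    exact ⟨k + n₀, hk.trans (by simp only [add_right_comm])⟩
  exact fun u v hu hv => hg u v (hfac u hu) (hfac v hv)

lemma IsBalanced.not {g : ℤ → Bool} (hg : IsBalanced g) : IsBalanced fun m => !g m := by
  have hfac : ∀ u, IsFactor (fun m => !g m) u → IsFactor g (u.map (!·)) := by
    rintro u ⟨k, hk⟩
    refine ⟨k, ?_⟩
    rw [List.length_map]
    nth_rewrite 1 [hk]
    simp [Function.comp_def]
  intro u v hu hv huv c
  simpa only [List.count_map_of_injective _ _ Bool.not_injective] using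
    hg _ _ (hfac u hu) (hfac v hv) (by simpa using huv) (!c)

lemma HasCentralFactorization.not {g : ℤ → Bool} (hg : HasCentralFactorization g) :
    HasCentralFactorization fun m => !g m :=
  ⟨by simpa using hg.1, fun n h₁ h₂ => by simp [hg.2 n h₁ h₂]⟩

lemma windowCount_succ (g : ℤ → Bool) (k : ℤ) (n : ℕ) :
    windowCount g k (n + 1) = windowCount g k n + (g (k + n)).toNat := by
  rw [windowCount_add, windowCount_one]

lemma windowCount_succ' (g : ℤ → Bool) (k : ℤ) (n : ℕ) :
    windowCount g k (n + 1) = (g k).toNat + windowCount g (k + 1) n := by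
  rw [add_comm n 1, windowCount_add, windowCount_one, Nat.cast_one]

section CentralFactorization

variable {g : ℤ → Bool}

lemma windowCount_neg_self (hcf : HasCentralFactorization g) (h0 : g 0 = false) {n : ℕ}
    (hn : n ≠ 0) : windowCount g (-n) n = windowCount g 0 n + 1 := by
  have h1 : g (-1) = true := by simpa [h0] using hcf.1
  induction n with
  | zero => exact absurd rfl hn
  | succ n ih =>
    rcases eq_or_ne n 0 with rfl | hn'
    · simp [windowCount_one, h0, h1]
    have hsym : g (-(n + 1 : ℕ)) = g n := by
      rw [hcf.2 n (by omega) (by omega)]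
      congr 1
      push_cast
      ring
    rw [windowCount_succ', hsym, show -((n + 1 : ℕ) : ℤ) + 1 = -n by push_cast; ring, ih hn',
      windowCount_succ, zero_add]
    ring

lemma windowCount_mem_Icc (hbal : IsBalanced g) (hcf : HasCentralFactorization g)
    (h0 : g 0 = false) (k : ℤ) (n : ℕ) :
    windowCount g k n ∈ Set.Icc (windowCount g 0 n) (windowCount g 0 n + 1) := by
  rcases eq_or_ne n 0 with rfl | hn
  · simp [windowCount]
  have hlow := abs_le.1 (hbal.abs_windowCount_sub_le k 0 n)
  have hhigh := abs_le.1 (hbal.abs_windowCount_sub_le k (-n) n)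
  rw [windowCount_neg_self hcf h0 hn] at hhigh
  constructor <;> omega

lemma subadditive_neg_windowCount (hbal : IsBalanced g) (hcf : HasCentralFactorization g)
    (h0 : g 0 = false) : Subadditive fun n => -(windowCount g 0 n : ℝ) := by
  intro n m
  have h : windowCount g 0 n + windowCount g 0 m ≤ windowCount g 0 (n + m) := by
    rw [windowCount_add]
    linarith [(windowCount_mem_Icc hbal hcf h0 (0 + n) m).1]
  beta_reduce
  exact_mod_cast (by linarith : -windowCount g 0 (n + m) ≤ -windowCount g 0 n + -windowCount g 0 m)

lemma subadditive_windowCount_add_one (hbal : IsBalanced g) (hcf : HasCentralFactorization g)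
    (h0 : g 0 = false) : Subadditive fun n => (windowCount g 0 n : ℝ) + 1 := by
  intro n m
  have h : windowCount g 0 (n + m) ≤ windowCount g 0 n + windowCount g 0 m + 1 := by
    rcases eq_or_ne m 0 with rfl | hm
    · simp [windowCount]
    -- split the window ending at `-1` of length `n + m` at `-m`
    have hsplit := windowCount_add g (-(n + m : ℕ)) n m
    rw [show -((n + m : ℕ) : ℤ) + n = -m by push_cast; ring, windowCount_neg_self hcf h0 hm,
      windowCount_neg_self hcf h0 (by omega)] at hsplit
    linarith [(windowCount_mem_Icc hbal hcf h0 (-(n + m : ℕ)) n).2]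
  beta_reduce
  exact_mod_cast (by linarith :
    windowCount g 0 (n + m) + 1 ≤ windowCount g 0 n + 1 + (windowCount g 0 m + 1))

end CentralFactorization

lemma div_lt_add_one_div_of_subadditive {f : ℕ → ℝ} (hf0 : f 0 = 0)
    (hsup : Subadditive fun n => -f n) (hsub : Subadditive fun n => f n + 1) {n m : ℕ}
    (hn : n ≠ 0) (hm : m ≠ 0) : f n / n < (f m + 1) / m := by
  have hlow : m * f n ≤ f (m * n) := by
    simpa [hf0] using hsup.apply_mul_add_le m n 0
  have hhigh : f (m * n) + 1 ≤ n * (f m + 1) := by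
    obtain ⟨k, rfl⟩ := Nat.exists_eq_succ_of_ne_zero hn
    have := hsub.apply_mul_add_le k m m
    rw [show m * (k + 1) = k * m + m by ring]
    push_cast
    linarith
  rw [div_lt_div_iff₀ (by positivity) (by positivity)]
  linarith

lemma exists_irrational_floor_mul_eq {f : ℕ → ℤ} (hf0 : f 0 = 0)
    (hf : ∀ n m : ℕ, n ≠ 0 → m ≠ 0 → (f n : ℝ) / n < (f m + 1) / m) (M : ℕ) :
    ∃ α : ℝ, Irrational α ∧ ∀ n ≤ M, ⌊α * n⌋ = f n := by
  set S := Finset.Icc 1 (M + 1)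
  have hS : S.Nonempty := ⟨1, by simp [S]⟩
  have hpos : ∀ n ∈ S, n ≠ 0 := fun n hn => by simp [S] at hn; omega
  have hlt : S.sup' hS (fun n => (f n : ℝ) / n) < S.inf' hS (fun m => ((f m : ℝ) + 1) / m) :=
    (Finset.sup'_lt_iff hS).2 fun n hn =>
      (Finset.lt_inf'_iff hS).2 fun m hm => hf n m (hpos n hn) (hpos m hm)
  obtain ⟨α, hirr, hlo, hhi⟩ := exists_irrational_btwn hlt
  refine ⟨α, hirr, fun n hn => ?_⟩
  rcases eq_or_ne n 0 with rfl | hn0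
  · simp [hf0]
  have hnS : n ∈ S := by simp [S]; omega
  have hnR : (0 : ℝ) < n := by positivity
  have h1 := (div_lt_iff₀ hnR).1 ((Finset.le_sup' _ hnS).trans_lt hlo)
  have h2 := (lt_div_iff₀ hnR).1 (hhi.trans_le (Finset.inf'_le _ hnS))
  rw [Int.floor_eq_iff]
  constructor <;> linarith

lemma Irrational.floor_neg {x : ℝ} (hx : Irrational x) : ⌊-x⌋ = -⌊x⌋ - 1 := by
  rw [Int.floor_neg, (Int.ceil_eq_floor_add_one_iff_notMem x).2 fun ⟨n, hn⟩ => hx.ne_int n hn.symm]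
  ring

lemma hasCentralFactorization_lowerMech {α : ℝ} (hα : Irrational α) (h : α ∈ Set.Icc 0 1) :
    HasCentralFactorization (lowerMech α) := by
  have hpos : 0 < α := h.1.lt_of_ne' hα.ne_zero
  have hlt : α < 1 := h.2.lt_of_ne hα.ne_one
  have hfloor : ⌊α⌋ = 0 := Int.floor_eq_zero_iff.2 ⟨hpos.le, hlt⟩
  refine ⟨by simp [lowerMech, hα.floor_neg, hfloor], fun n hn₁ hn₀ => ?_⟩
  have hirr : Irrational (α * n) := hα.mul_intCast hn₀
  have hirr' : Irrational (α * (n + 1)) := by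
    simpa using hα.mul_intCast (show n + 1 ≠ 0 by omega)
  have hrefl : ⌊α * ((-n - 1 : ℤ) + 1 : ℝ)⌋ - ⌊α * ((-n - 1 : ℤ) : ℝ)⌋ =
      ⌊α * (n + 1)⌋ - ⌊α * n⌋ := by
    rw [show α * ((-n - 1 : ℤ) + 1 : ℝ) = -(α * n) by push_cast; ring,
      show α * ((-n - 1 : ℤ) : ℝ) = -(α * (n + 1)) by push_cast; ring, hirr.floor_neg,
      hirr'.floor_neg]
    ring
  simp only [lowerMech, hrefl]

lemma upperMech_one_sub {α : ℝ} (h : α ∈ Set.Icc 0 1) (m : ℤ) :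
    upperMech (1 - α) m = !lowerMech α m := by
  have hceil : ∀ j : ℤ, ⌈(1 - α) * j⌉ = j - ⌊α * j⌋ := fun j => by
    rw [show (1 - α) * j = -(α * j) + j by ring, Int.ceil_add_intCast, Int.ceil_neg]
    ring
  have hmono : ⌊α * m⌋ ≤ ⌊α * (m + 1)⌋ := Int.floor_le_floor (by nlinarith [h.1])
  have hstep : ⌊α * (m + 1)⌋ ≤ ⌊α * m⌋ + 1 := by
    rw [← Int.floor_add_one]
    exact Int.floor_le_floor (by nlinarith [h.2])
  have hup := hceil (m + 1)
  have hlow := hceil m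
  push_cast at hup
  rw [upperMech, lowerMech, hup, hlow]
  rcases (by omega : ⌊α * (m + 1)⌋ = ⌊α * m⌋ ∨ ⌊α * (m + 1)⌋ = ⌊α * m⌋ + 1) with h' | h' <;>
    simp [h']

lemma hasCentralFactorization_upperMech {α : ℝ} (hα : Irrational α) (h : α ∈ Set.Icc 0 1) :
    HasCentralFactorization (upperMech α) := by
  have h' : 1 - α ∈ Set.Icc (0 : ℝ) 1 := ⟨by linarith [h.2], by linarith [h.1]⟩
  have heq : upperMech α = fun m => !lowerMech (1 - α) m := by
    funext m
    rw [← upperMech_one_sub h', sub_sub_cancel]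
  rw [heq]
  exact (hasCentralFactorization_lowerMech (by simpa using hα.intCast_sub 1) h').not

lemma PointwiseLimit.hasCentralFactorization {u : ℕ → ℤ → Bool} {t : ℤ → Bool}
    (hlim : PointwiseLimit u t) (hu : ∀ k, HasCentralFactorization (u k)) :
    HasCentralFactorization t := by
  refine ⟨?_, fun n hn₁ hn₀ => ?_⟩
  · obtain ⟨k, hk₁, hk₀⟩ := ((hlim (-1)).and (hlim 0)).exists
    rw [← hk₁, ← hk₀]
    exact (hu k).1
  · obtain ⟨k, hk₁, hk₂⟩ := ((hlim n).and (hlim (-n - 1))).exists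
    rw [← hk₁, ← hk₂]
    exact (hu k).2 n hn₁ hn₀

lemma HasCentralFactorization.eq_of_forall_natCast_eq {u v : ℤ → Bool}
    (hu : HasCentralFactorization u) (hv : HasCentralFactorization v) {N : ℕ}
    (h : ∀ n : ℕ, n ≤ N → u n = v n) (m : ℤ) (hm : m.natAbs ≤ N) : u m = v m := by
  rcases le_or_gt 0 m with hm₀ | hm₀
  · lift m to ℕ using hm₀
    exact h m (by simpa using hm)
  rcases eq_or_ne m (-1) with rfl | hm₁
  · have h₀ := h 0 (Nat.zero_le N)
    simp only [Nat.cast_zero] at h₀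
    rw [Bool.eq_not.2 hu.1, Bool.eq_not.2 hv.1, h₀]
  · obtain ⟨n, hn⟩ : ∃ n : ℕ, (n : ℤ) = -m - 1 := ⟨(-m - 1).toNat, by omega⟩
    rw [hu.2 m hm₁ hm₀.ne, hv.2 m hm₁ hm₀.ne, ← hn]
    exact h n (by omega)

lemma lowerMech_natCast_eq {α : ℝ} {g : ℤ → Bool} {N : ℕ}
    (h : ∀ n ≤ N + 1, ⌊α * n⌋ = windowCount g 0 n) {n : ℕ} (hn : n ≤ N) :
    lowerMech α n = g n := by
  have h₁ := h (n + 1) (by omega)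
  have h₀ := h n (by omega)
  push_cast at h₁
  rw [lowerMech, Int.cast_natCast, h₁, h₀, windowCount_succ, zero_add]
  cases g n <;> simp

lemma exists_lowerMech_eq_of_natAbs_le {g : ℤ → Bool} (hbal : IsBalanced g)
    (hcf : HasCentralFactorization g) (h0 : g 0 = false) (N : ℕ) :
    ∃ α : ℝ, Irrational α ∧ α ∈ Set.Icc 0 1 ∧ ∀ m : ℤ, m.natAbs ≤ N → lowerMech α m = g m := by
  obtain ⟨α, hirr, hfloor⟩ := exists_irrational_floor_mul_eq (by simp [windowCount])
    (fun n m hn hm => div_lt_add_one_div_of_subadditive (by simp [windowCount])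
      (subadditive_neg_windowCount hbal hcf h0) (subadditive_windowCount_add_one hbal hcf h0) hn hm)
    (N + 1)
  have hα : α ∈ Set.Icc 0 1 := by
    have h1 := hfloor 1 (by omega)
    simp only [Nat.cast_one, mul_one, windowCount_one, h0, Bool.toNat_false, Nat.cast_zero,
      Int.floor_eq_zero_iff] at h1
    exact ⟨h1.1, h1.2.le⟩
  exact ⟨α, hirr, hα, (hasCentralFactorization_lowerMech hirr hα).eq_of_forall_natCast_eq hcf
    fun n hn => lowerMech_natCast_eq hfloor hn⟩

lemma PointwiseLimit.of_forall_natAbs_le {u : ℕ → ℤ → Bool} {t : ℤ → Bool}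
    (h : ∀ k : ℕ, ∀ m : ℤ, m.natAbs ≤ k → u k m = t m) : PointwiseLimit u t := fun m =>
  Filter.eventually_atTop.2 ⟨m.natAbs, fun k hk => h k m hk⟩

lemma IsBalanced.exists_pointwiseLimit_mech {g : ℤ → Bool} (hbal : IsBalanced g)
    (hcf : HasCentralFactorization g) :
    ∃ α : ℕ → ℝ, (∀ k, α k ∈ Set.Icc (0 : ℝ) 1 ∧ Irrational (α k)) ∧
      (PointwiseLimit (fun k => lowerMech (α k)) g ∨
       PointwiseLimit (fun k => upperMech (α k)) g) := by
  cases h0 : g 0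
  · choose α hirr hα heq using exists_lowerMech_eq_of_natAbs_le hbal hcf h0
    exact ⟨α, fun k => ⟨hα k, hirr k⟩, Or.inl (PointwiseLimit.of_forall_natAbs_le heq)⟩
  · -- the complement starts with `ba`, and complementing turns `s_{α,0}` into `s'_{1-α,0}`
    choose α hirr hα heq using exists_lowerMech_eq_of_natAbs_le hbal.not hcf.not (by simp [h0])
    refine ⟨fun k => 1 - α k, fun k => ⟨⟨by linarith [(hα k).2], by linarith [(hα k).1]⟩,
      by simpa using (hirr k).intCast_sub 1⟩, Or.inr (PointwiseLimit.of_forall_natAbs_le ?_)⟩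
    intro k m hm
    rw [upperMech_one_sub (hα k), heq k m hm, Bool.not_not]

theorem centralFactorization_iff_limit_of_mechanical
    (s : ℤ → Bool) (hs : IsBalanced s) (n₀ : ℤ) :
    HasCentralFactorization (fun m => s (m + n₀)) ↔
    ∃ α : ℕ → ℝ, (∀ k, α k ∈ Set.Icc (0 : ℝ) 1 ∧ Irrational (α k)) ∧
      (PointwiseLimit (fun k => lowerMech (α k)) (fun m => s (m + n₀)) ∨
       PointwiseLimit (fun k => upperMech (α k)) (fun m => s (m + n₀))) := by
  refine ⟨(hs.comp_add_right n₀).exists_pointwiseLimit_mech, ?_⟩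
  rintro ⟨α, hα, hlim | hlim⟩
  · exact hlim.hasCentralFactorization fun k => hasCentralFactorization_lowerMech (hα k).2 (hα k).1
  · exact hlim.hasCentralFactorization fun k => hasCentralFactorization_upperMech (hα k).2 (hα k).1
end

section
/- Let w ∈ Σ* and write μ_q(w) = [[m, n], [o, p]] with m, n, o, p ∈ ℤ[q]. Then: (i) m and p are nonzero polynomials with nonnegative integer coefficients; (ii) n and o are polynomials with nonnegative integer coefficients, and they are nonzero whenever w is nonempty (while n = o = 0 when w is empty); (iii) qm − q²n + o is a nonzero polynomial with nonnegative integer coefficients; (iv) (q + q²)m − (q² + q³ + q⁴)n + o − qp is a nonzero polynomial with nonnegative integer coefficients. -/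
open Polynomial

/-- The letter `a` is encoded by `false`, the letter `b` by `true`.
`μ_q` of a single letter. -/
noncomputable def muqLetter : Bool → Matrix (Fin 2) (Fin 2) (Polynomial ℤ)
  | false => !![X + X ^ 2, 1; X, 1]
  | true  => !![X + 2 * X ^ 2 + X ^ 3 + X ^ 4, 1 + X; X + X ^ 2, 1]

/-- The monoid homomorphism `μ_q : Σ* → M₂(ℤ[q])`, extended multiplicatively,
with the empty word mapped to the identity matrix. -/
noncomputable def muq (w : List Bool) : Matrix (Fin 2) (Fin 2) (Polynomial ℤ) :=
  (w.map muqLetter).prod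


/-- `f` is a nonzero polynomial with nonnegative integer coefficients. -/
def PolyPos (f : Polynomial ℤ) : Prop :=
  f ≠ 0 ∧ ∀ i : ℕ, 0 ≤ f.coeff i

/-- nonnegative coefficients -/
def Good (f : Polynomial ℤ) : Prop := ∀ i : ℕ, 0 ≤ f.coeff i

lemma good_add {f g : Polynomial ℤ} (hf : Good f) (hg : Good g) : Good (f + g) := by
  intro i; rw [coeff_add]; exact add_nonneg (hf i) (hg i)

lemma good_mul {f g : Polynomial ℤ} (hf : Good f) (hg : Good g) : Good (f * g) := by
  intro i; rw [coeff_mul]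
  exact Finset.sum_nonneg fun x _ => mul_nonneg (hf x.1) (hg x.2)

lemma good_one : Good 1 := by intro i; rw [coeff_one]; split <;> norm_num

lemma good_zero : Good 0 := by intro i; simp

lemma good_X : Good (X : Polynomial ℤ) := by
  intro i; rw [coeff_X]; split <;> norm_num

lemma good_Xpow (n : ℕ) : Good ((X : Polynomial ℤ) ^ n) := by
  intro i; rw [coeff_X_pow]; split <;> norm_num

lemma polyPos_add_good {f g : Polynomial ℤ} (hf : PolyPos f) (hg : Good g) :
    PolyPos (f + g) := by
  obtain ⟨hne, hcf⟩ := hf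
  refine ⟨?_, good_add hcf hg⟩
  obtain ⟨i, hi⟩ : ∃ i, f.coeff i ≠ 0 := by
    by_contra h; push_neg at h
    exact hne (Polynomial.ext fun i => by simp [h i])
  intro h0
  have : (f + g).coeff i = 0 := by rw [h0]; simp
  rw [coeff_add] at this
  have h1 : 0 < f.coeff i := lt_of_le_of_ne (hcf i) (Ne.symm hi)
  linarith [hg i]

lemma good_add_polyPos {f g : Polynomial ℤ} (hf : Good f) (hg : PolyPos g) :
    PolyPos (f + g) := by
  rw [add_comm]; exact polyPos_add_good hg hf

lemma polyPos_mul {f g : Polynomial ℤ} (hf : PolyPos f) (hg : PolyPos g) :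
    PolyPos (f * g) := ⟨mul_ne_zero hf.1 hg.1, good_mul hf.2 hg.2⟩

lemma polyPos_X : PolyPos (X : Polynomial ℤ) := ⟨X_ne_zero, good_X⟩

lemma polyPos_Xpow (n : ℕ) : PolyPos ((X : Polynomial ℤ) ^ n) :=
  ⟨pow_ne_zero _ X_ne_zero, good_Xpow n⟩

lemma polyPos_one : PolyPos (1 : Polynomial ℤ) := ⟨one_ne_zero, good_one⟩

-- some specific polynomials
lemma posP1 : PolyPos (X + X ^ 2 : Polynomial ℤ) :=
  polyPos_add_good polyPos_X (good_Xpow 2)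

lemma goodP1 : Good (X + X ^ 2 : Polynomial ℤ) := posP1.2

lemma posPb : PolyPos (X + 2 * X ^ 2 + X ^ 3 + X ^ 4 : Polynomial ℤ) := by
  have h2 : Good (2 * X ^ 2 : Polynomial ℤ) := by
    have h : (2 * X ^ 2 : Polynomial ℤ) = X ^ 2 + X ^ 2 := by ring
    rw [h]; exact good_add (good_Xpow 2) (good_Xpow 2)
  exact polyPos_add_good (polyPos_add_good (polyPos_add_good polyPos_X h2)
    (good_Xpow 3)) (good_Xpow 4)

lemma goodPb : Good (X + 2 * X ^ 2 + X ^ 3 + X ^ 4 : Polynomial ℤ) := posPb.2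

lemma goodP1X : Good (1 + X : Polynomial ℤ) := good_add good_one good_X

lemma posP345 : PolyPos (X ^ 3 + X ^ 4 + X ^ 5 : Polynomial ℤ) :=
  polyPos_add_good (polyPos_add_good (polyPos_Xpow 3) (good_Xpow 4)) (good_Xpow 5)

lemma posP3456 : PolyPos (X ^ 3 + X ^ 4 + X ^ 5 + X ^ 6 : Polynomial ℤ) :=
  polyPos_add_good posP345 (good_Xpow 6)

lemma posP234 : PolyPos (X ^ 2 + X ^ 3 + X ^ 4 : Polynomial ℤ) :=
  polyPos_add_good (polyPos_add_good (polyPos_Xpow 2) (good_Xpow 3)) (good_Xpow 4)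

lemma muq_nil : muq [] = 1 := by simp [muq]

lemma muq_concat (w : List Bool) (x : Bool) :
    muq (w ++ [x]) = muq w * muqLetter x := by
  simp [muq]

lemma muq_concat_false (w : List Bool) :
    muq (w ++ [false]) 0 0 = muq w 0 0 * (X + X ^ 2) + muq w 0 1 * X ∧
    muq (w ++ [false]) 0 1 = muq w 0 0 * 1 + muq w 0 1 * 1 ∧
    muq (w ++ [false]) 1 0 = muq w 1 0 * (X + X ^ 2) + muq w 1 1 * X ∧
    muq (w ++ [false]) 1 1 = muq w 1 0 * 1 + muq w 1 1 * 1 := by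
  rw [muq_concat]
  refine ⟨?_, ?_, ?_, ?_⟩ <;>
    simp [Matrix.mul_apply, Fin.sum_univ_two, muqLetter]

lemma muq_concat_true (w : List Bool) :
    muq (w ++ [true]) 0 0 = muq w 0 0 * (X + 2 * X ^ 2 + X ^ 3 + X ^ 4)
        + muq w 0 1 * (X + X ^ 2) ∧
    muq (w ++ [true]) 0 1 = muq w 0 0 * (1 + X) + muq w 0 1 * 1 ∧
    muq (w ++ [true]) 1 0 = muq w 1 0 * (X + 2 * X ^ 2 + X ^ 3 + X ^ 4)
        + muq w 1 1 * (X + X ^ 2) ∧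
    muq (w ++ [true]) 1 1 = muq w 1 0 * (1 + X) + muq w 1 1 * 1 := by
  rw [muq_concat]
  refine ⟨?_, ?_, ?_, ?_⟩ <;>
    simp [Matrix.mul_apply, Fin.sum_univ_two, muqLetter]

/-- The main induction. -/
lemma muq_key (w : List Bool) :
    PolyPos (muq w 0 0) ∧ Good (muq w 0 1) ∧ Good (muq w 1 0) ∧
    PolyPos (muq w 1 1) ∧ PolyPos (muq w 0 0 - X * muq w 0 1) ∧
    (w ≠ [] → muq w 0 1 ≠ 0 ∧ muq w 1 0 ≠ 0) := by
  induction w using List.reverseRecOn with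
  | nil =>
      rw [muq_nil]
      refine ⟨?_, ?_, ?_, ?_, ?_, fun h => absurd rfl h⟩ <;>
        simp [Matrix.one_apply] <;>
        first
          | exact polyPos_one
          | exact good_zero
  | append_singleton v x ih =>
      obtain ⟨hm, hn, ho, hp, hs, _⟩ := ih
      cases x with
      | false =>
          obtain ⟨e1, e2, e3, e4⟩ := muq_concat_false v
          rw [e1, e2, e3, e4]
          refine ⟨?_, ?_, ?_, ?_, ?_, fun _ => ⟨?_, ?_⟩⟩
          · exact polyPos_add_good (polyPos_mul hm posP1) (good_mul hn good_X)
          · exact good_add (good_mul hm.2 good_one) (good_mul hn good_one)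
          · exact good_add (good_mul ho goodP1) (good_mul hp.2 good_X)
          · exact good_add_polyPos (good_mul ho good_one) (polyPos_mul hp polyPos_one)
          · have h : muq v 0 0 * (X + X ^ 2) + muq v 0 1 * X
                - X * (muq v 0 0 * 1 + muq v 0 1 * 1)
                = X ^ 2 * muq v 0 0 := by ring
            rw [h]; exact polyPos_mul (polyPos_Xpow 2) hm
          · exact (polyPos_add_good (polyPos_mul hm polyPos_one)
              (good_mul hn good_one)).1
          · exact (good_add_polyPos (good_mul ho goodP1)
              (polyPos_mul hp polyPos_X)).1
      | true =>
          obtain ⟨e1, e2, e3, e4⟩ := muq_concat_true v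
          rw [e1, e2, e3, e4]
          refine ⟨?_, ?_, ?_, ?_, ?_, fun _ => ⟨?_, ?_⟩⟩
          · exact polyPos_add_good (polyPos_mul hm posPb) (good_mul hn goodP1)
          · exact good_add (good_mul hm.2 goodP1X) (good_mul hn good_one)
          · exact good_add (good_mul ho goodPb) (good_mul hp.2 goodP1)
          · exact good_add_polyPos (good_mul ho goodP1X) (polyPos_mul hp polyPos_one)
          · have h : muq v 0 0 * (X + 2 * X ^ 2 + X ^ 3 + X ^ 4)
                + muq v 0 1 * (X + X ^ 2)
                - X * (muq v 0 0 * (1 + X) + muq v 0 1 * 1)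
                = (X ^ 2 + X ^ 3 + X ^ 4) * muq v 0 0 + X ^ 2 * muq v 0 1 := by ring
            rw [h]
            exact polyPos_add_good (polyPos_mul posP234 hm)
              (good_mul (good_Xpow 2) hn)
          · exact (polyPos_add_good (polyPos_mul hm
              (polyPos_add_good polyPos_one good_X)) (good_mul hn good_one)).1
          · exact (good_add_polyPos (good_mul ho goodPb)
              (polyPos_mul hp posP1)).1

theorem muq_entries_inequalities (w : List Bool) :
    PolyPos (muq w 0 0) ∧ PolyPos (muq w 1 1) ∧
    (∀ i : ℕ, 0 ≤ (muq w 0 1).coeff i) ∧ (∀ i : ℕ, 0 ≤ (muq w 1 0).coeff i) ∧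
    (w ≠ [] → muq w 0 1 ≠ 0 ∧ muq w 1 0 ≠ 0) ∧
    (w = [] → muq w 0 1 = 0 ∧ muq w 1 0 = 0) ∧
    PolyPos (X * muq w 0 0 - X ^ 2 * muq w 0 1 + muq w 1 0) ∧
    PolyPos ((X + X ^ 2) * muq w 0 0 - (X ^ 2 + X ^ 3 + X ^ 4) * muq w 0 1
      + muq w 1 0 - X * muq w 1 1) := by
  obtain ⟨hm, hn, ho, hp, hs, hne⟩ := muq_key w
  refine ⟨hm, hp, hn, ho, hne, ?_, ?_, ?_⟩
  · rintro rfl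
    rw [muq_nil]
    constructor <;> simp [Matrix.one_apply]
  · -- A
    rcases w.eq_nil_or_concat with h | ⟨v, x, rfl⟩
    · subst h
      rw [muq_nil]
      have h1 : X * (1 : Matrix (Fin 2) (Fin 2) (Polynomial ℤ)) 0 0
          - X ^ 2 * (1 : Matrix (Fin 2) (Fin 2) (Polynomial ℤ)) 0 1
          + (1 : Matrix (Fin 2) (Fin 2) (Polynomial ℤ)) 1 0 = X := by
        simp [Matrix.one_apply]
      rw [h1]; exact polyPos_X
    · obtain ⟨hm', hn', ho', hp', hs', _⟩ := muq_key v
      simp only [List.concat_eq_append]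
      cases x with
      | false =>
          obtain ⟨e1, e2, e3, e4⟩ := muq_concat_false v
          rw [e1, e2, e3]
          have h : X * (muq v 0 0 * (X + X ^ 2) + muq v 0 1 * X)
              - X ^ 2 * (muq v 0 0 * 1 + muq v 0 1 * 1)
              + (muq v 1 0 * (X + X ^ 2) + muq v 1 1 * X)
              = X ^ 3 * muq v 0 0 + (X + X ^ 2) * muq v 1 0 + X * muq v 1 1 := by
            ring
          rw [h]
          exact polyPos_add_good (polyPos_add_good
            (polyPos_mul (polyPos_Xpow 3) hm') (good_mul goodP1 ho'))
            (good_mul good_X hp'.2)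
      | true =>
          obtain ⟨e1, e2, e3, e4⟩ := muq_concat_true v
          rw [e1, e2, e3]
          have h : X * (muq v 0 0 * (X + 2 * X ^ 2 + X ^ 3 + X ^ 4)
                + muq v 0 1 * (X + X ^ 2))
              - X ^ 2 * (muq v 0 0 * (1 + X) + muq v 0 1 * 1)
              + (muq v 1 0 * (X + 2 * X ^ 2 + X ^ 3 + X ^ 4)
                + muq v 1 1 * (X + X ^ 2))
              = (X ^ 3 + X ^ 4 + X ^ 5) * muq v 0 0 + X ^ 3 * muq v 0 1
                + (X + 2 * X ^ 2 + X ^ 3 + X ^ 4) * muq v 1 0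
                + (X + X ^ 2) * muq v 1 1 := by ring
          rw [h]
          exact polyPos_add_good (polyPos_add_good (polyPos_add_good
            (polyPos_mul posP345 hm') (good_mul (good_Xpow 3) hn'))
            (good_mul goodPb ho')) (good_mul goodP1 hp'.2)
  · -- B
    rcases w.eq_nil_or_concat with h | ⟨v, x, rfl⟩
    · subst h
      rw [muq_nil]
      have h1 : (X + X ^ 2) * (1 : Matrix (Fin 2) (Fin 2) (Polynomial ℤ)) 0 0
          - (X ^ 2 + X ^ 3 + X ^ 4) * (1 : Matrix (Fin 2) (Fin 2) (Polynomial ℤ)) 0 1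
          + (1 : Matrix (Fin 2) (Fin 2) (Polynomial ℤ)) 1 0
          - X * (1 : Matrix (Fin 2) (Fin 2) (Polynomial ℤ)) 1 1 = X ^ 2 := by
        simp [Matrix.one_apply]
      rw [h1]; exact polyPos_Xpow 2
    · obtain ⟨hm', hn', ho', hp', hs', _⟩ := muq_key v
      simp only [List.concat_eq_append]
      cases x with
      | false =>
          obtain ⟨e1, e2, e3, e4⟩ := muq_concat_false v
          rw [e1, e2, e3, e4]
          have h : (X + X ^ 2) * (muq v 0 0 * (X + X ^ 2) + muq v 0 1 * X)
              - (X ^ 2 + X ^ 3 + X ^ 4) * (muq v 0 0 * 1 + muq v 0 1 * 1)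
              + (muq v 1 0 * (X + X ^ 2) + muq v 1 1 * X)
              - X * (muq v 1 0 * 1 + muq v 1 1 * 1)
              = X ^ 3 * (muq v 0 0 - X * muq v 0 1) + X ^ 2 * muq v 1 0 := by ring
          rw [h]
          exact polyPos_add_good (polyPos_mul (polyPos_Xpow 3) hs')
            (good_mul (good_Xpow 2) ho')
      | true =>
          obtain ⟨e1, e2, e3, e4⟩ := muq_concat_true v
          rw [e1, e2, e3, e4]
          have h : (X + X ^ 2) * (muq v 0 0 * (X + 2 * X ^ 2 + X ^ 3 + X ^ 4)
                + muq v 0 1 * (X + X ^ 2))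
              - (X ^ 2 + X ^ 3 + X ^ 4) * (muq v 0 0 * (1 + X) + muq v 0 1 * 1)
              + (muq v 1 0 * (X + 2 * X ^ 2 + X ^ 3 + X ^ 4)
                + muq v 1 1 * (X + X ^ 2))
              - X * (muq v 1 0 * (1 + X) + muq v 1 1 * 1)
              = (X ^ 3 + X ^ 4 + X ^ 5 + X ^ 6) * muq v 0 0 + X ^ 3 * muq v 0 1
                + (X ^ 2 + X ^ 3 + X ^ 4) * muq v 1 0 + X ^ 2 * muq v 1 1 := by
            ring
          rw [h]
          exact polyPos_add_good (polyPos_add_good (polyPos_add_good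
            (polyPos_mul posP3456 hm') (good_mul (good_Xpow 3) hn'))
            (good_mul posP234.2 ho')) (good_mul (good_Xpow 2) hp'.2)
end

section
/- Let u, v ∈ Σ* be words such that u is a prefix of v or v is a prefix of u. Then μ_q(ũ·ab·v)₁₂ ≺ μ_q(ũ·ba·v)₁₂, where ũ denotes the reversal of u. -/
open Polynomial

/-- `f ≺ g` iff `f ≠ g` and `g - f` has nonnegative integer coefficients. -/
noncomputable def Kmat : Matrix (Fin 2) (Fin 2) (Polynomial ℤ) := !![0, 1; -X, 0]
noncomputable def dd : Bool → Polynomial ℤ := fun s => if s then X^4 else X^2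

lemma muq_cons (s : Bool) (t : List Bool) : muq (s::t) = muqLetter s * muq t := by simp [muq]
lemma muq_append (x y : List Bool) : muq (x++y) = muq x * muq y := by simp [muq]
lemma muq_single (s : Bool) : muq [s] = muqLetter s := by simp [muq]

lemma sandwich (s : Bool) : muqLetter s * Kmat * muqLetter s = dd s • Kmat := by
  cases s <;>
  · refine Matrix.ext fun i j => ?_
    fin_cases i <;> fin_cases j <;>
      simp [muqLetter, Kmat, dd, Matrix.mul_apply, Fin.sum_univ_two] <;> ring

lemma commLem : muqLetter true * muqLetter false - muqLetter false * muqLetter true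
    = ((X + X^4 : Polynomial ℤ)) • Kmat := by
  refine Matrix.ext fun i j => ?_
  fin_cases i <;> fin_cases j <;>
    simp [muqLetter, Kmat, Matrix.mul_apply, Fin.sum_univ_two] <;> ring

lemma conj (u : List Bool) :
    muq u.reverse * Kmat * muq u = (u.map dd).prod • Kmat := by
  induction u with
  | nil => simp [muq_nil]
  | cons s t ih =>
    rw [List.reverse_cons, muq_append, muq_single, muq_cons]
    calc muq t.reverse * muqLetter s * Kmat * (muqLetter s * muq t)
        = muq t.reverse * (muqLetter s * Kmat * muqLetter s) * muq t := by
          simp [mul_assoc]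
      _ = muq t.reverse * (dd s • Kmat) * muq t := by rw [sandwich]
      _ = dd s • (muq t.reverse * Kmat * muq t) := by
          rw [mul_smul_comm, smul_mul_assoc]
      _ = ((s::t).map dd).prod • Kmat := by
          rw [ih, smul_smul, List.map_cons, List.prod_cons]

/-- nonnegative coefficients -/
def Nn (p : Polynomial ℤ) : Prop := ∀ i, 0 ≤ p.coeff i

lemma nn_add {p q : Polynomial ℤ} (hp : Nn p) (hq : Nn q) : Nn (p + q) := fun n => by
  rw [coeff_add]; exact add_nonneg (hp n) (hq n)
lemma nn_mul {p q : Polynomial ℤ} (hp : Nn p) (hq : Nn q) : Nn (p * q) := fun n => by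
  rw [coeff_mul]; exact Finset.sum_nonneg fun x _ => mul_nonneg (hp _) (hq _)
lemma nn_X : Nn (X : Polynomial ℤ) := fun n => by
  rw [coeff_X]; split <;> norm_num
lemma nn_one : Nn (1 : Polynomial ℤ) := fun n => by
  rw [coeff_one]; split <;> norm_num
lemma nn_Xpow (k : ℕ) : Nn (X^k : Polynomial ℤ) := fun n => by
  rw [coeff_X_pow]; split <;> norm_num
lemma nn_two : Nn (2 : Polynomial ℤ) := by
  have h : (2 : Polynomial ℤ) = 1 + 1 := by norm_num
  rw [h]; exact nn_add nn_one nn_one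

lemma nn_letter (s : Bool) (i j : Fin 2) : Nn (muqLetter s i j) := by
  fin_cases i <;> fin_cases j <;> cases s <;> simp [muqLetter] <;>
    first
    | exact nn_add nn_X (nn_Xpow 2)
    | exact nn_one
    | exact nn_X
    | exact nn_add (nn_add (nn_add nn_X (nn_mul nn_two (nn_Xpow 2))) (nn_Xpow 3)) (nn_Xpow 4)
    | exact nn_add nn_one nn_X

lemma nn_muq (w : List Bool) (i j : Fin 2) : Nn (muq w i j) := by
  induction w generalizing i j with
  | nil =>
    rw [muq_nil, Matrix.one_apply]
    split
    · exact nn_one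
    · intro n; simp
  | cons s t ih =>
    rw [muq_cons, Matrix.mul_apply, Fin.sum_univ_two]
    exact nn_add (nn_mul (nn_letter s i 0) (ih 0 j)) (nn_mul (nn_letter s i 1) (ih 1 j))

lemma nn_prod_dd (u : List Bool) : Nn ((u.map dd).prod) := by
  induction u with
  | nil => simpa using nn_one
  | cons s t ih =>
    rw [List.map_cons, List.prod_cons]
    refine nn_mul ?_ ih
    cases s <;> simp [dd] <;> exact nn_Xpow _

lemma eval_prod_dd (u : List Bool) : ((u.map dd).prod).eval 1 = 1 := by
  induction u with
  | nil => simp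
  | cons s t ih => cases s <;> simp [dd, ih]

lemma eval_pos (w : List Bool) :
    0 < (muq w 0 0).eval 1 ∧ 0 ≤ (muq w 0 1).eval 1 ∧
    0 ≤ (muq w 1 0).eval 1 ∧ 0 < (muq w 1 1).eval 1 := by
  induction w with
  | nil => rw [muq_nil]; norm_num [Matrix.one_apply]
  | cons s t ih =>
    obtain ⟨h1, h2, h3, h4⟩ := ih
    rw [muq_cons]
    cases s <;>
      simp [Matrix.mul_apply, Fin.sum_univ_two, muqLetter] <;>
      refine ⟨by nlinarith, by nlinarith, by nlinarith, by nlinarith⟩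

lemma muq_pair (s t : Bool) : muq [s, t] = muqLetter s * muqLetter t := by simp [muq]

def PolyPrec (f g : Polynomial ℤ) : Prop :=
  f ≠ g ∧ ∀ i : ℕ, 0 ≤ (g - f).coeff i

theorem main1 (u w : List Bool) :
    PolyPrec (muq (u.reverse ++ [false, true] ++ (u ++ w)) 0 1)
      (muq (u.reverse ++ [true, false] ++ (u ++ w)) 0 1) := by
  have hM : muq (u.reverse ++ [true, false] ++ (u ++ w))
      - muq (u.reverse ++ [false, true] ++ (u ++ w))
      = ((X + X ^ 4) * (u.map dd).prod) • (Kmat * muq w) := by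
    simp only [muq_append, muq_pair]
    calc muq u.reverse * (muqLetter true * muqLetter false) * (muq u * muq w)
          - muq u.reverse * (muqLetter false * muqLetter true) * (muq u * muq w)
        = (muq u.reverse
            * (muqLetter true * muqLetter false - muqLetter false * muqLetter true)
            * muq u) * muq w := by noncomm_ring
      _ = (muq u.reverse * (((X + X ^ 4 : Polynomial ℤ)) • Kmat) * muq u) * muq w := by
          rw [commLem]
      _ = ((X + X ^ 4) * (u.map dd).prod) • (Kmat * muq w) := by
          rw [mul_smul_comm, smul_mul_assoc, conj, smul_smul, smul_mul_assoc]
  have h01 : muq (u.reverse ++ [true, false] ++ (u ++ w)) 0 1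
      - muq (u.reverse ++ [false, true] ++ (u ++ w)) 0 1
      = ((X + X ^ 4) * (u.map dd).prod) * muq w 1 1 := by
    have h := congrFun (congrFun hM 0) 1
    simpa [Matrix.sub_apply, Matrix.smul_apply, smul_eq_mul, Matrix.mul_apply,
      Fin.sum_univ_two, Kmat, Matrix.vecMul, dotProduct] using h
  have hnz : ((X + X ^ 4) * (u.map dd).prod) * muq w 1 1 ≠ 0 := by
    intro hz
    have h1 := congrArg (eval 1) hz
    rcases eval_pos w with ⟨_, _, _, h4⟩
    simp [eval_prod_dd] at h1
    nlinarith [h4, h1]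
  constructor
  · intro heq
    exact hnz (by rw [← h01, heq, sub_self])
  · intro i
    rw [h01]
    exact nn_mul (nn_mul (nn_add nn_X (nn_Xpow 4)) (nn_prod_dd u)) (nn_muq w 1 1) i

theorem main2 (v w : List Bool) :
    PolyPrec (muq ((v ++ w).reverse ++ [false, true] ++ v) 0 1)
      (muq ((v ++ w).reverse ++ [true, false] ++ v) 0 1) := by
  have hM : muq ((v ++ w).reverse ++ [true, false] ++ v)
      - muq ((v ++ w).reverse ++ [false, true] ++ v)
      = ((X + X ^ 4) * (v.map dd).prod) • (muq w.reverse * Kmat) := by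
    rw [List.reverse_append]
    simp only [muq_append, muq_pair]
    calc muq w.reverse * muq v.reverse * (muqLetter true * muqLetter false) * muq v
          - muq w.reverse * muq v.reverse * (muqLetter false * muqLetter true) * muq v
        = muq w.reverse * (muq v.reverse
            * (muqLetter true * muqLetter false - muqLetter false * muqLetter true)
            * muq v) := by noncomm_ring
      _ = muq w.reverse * (muq v.reverse * (((X + X ^ 4 : Polynomial ℤ)) • Kmat) * muq v) := by
          rw [commLem]
      _ = ((X + X ^ 4) * (v.map dd).prod) • (muq w.reverse * Kmat) := by
          rw [mul_smul_comm, smul_mul_assoc, conj, smul_smul, mul_smul_comm]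
  have h01 : muq ((v ++ w).reverse ++ [true, false] ++ v) 0 1
      - muq ((v ++ w).reverse ++ [false, true] ++ v) 0 1
      = ((X + X ^ 4) * (v.map dd).prod) * muq w.reverse 0 0 := by
    have h := congrFun (congrFun hM 0) 1
    simpa [Matrix.sub_apply, Matrix.smul_apply, smul_eq_mul, Matrix.mul_apply,
      Fin.sum_univ_two, Kmat, Matrix.vecMul, dotProduct] using h
  have hnz : ((X + X ^ 4) * (v.map dd).prod) * muq w.reverse 0 0 ≠ 0 := by
    intro hz
    have h1 := congrArg (eval 1) hz
    rcases eval_pos w.reverse with ⟨h0, _, _, _⟩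
    simp [eval_prod_dd] at h1
    nlinarith [h0, h1]
  constructor
  · intro heq
    exact hnz (by rw [← h01, heq, sub_self])
  · intro i
    rw [h01]
    exact nn_mul (nn_mul (nn_add nn_X (nn_Xpow 4)) (nn_prod_dd v)) (nn_muq w.reverse 0 0) i


theorem muq12_increasing_on_flip (u v : List Bool)
    (huv : u <+: v ∨ v <+: u) :
    PolyPrec (muq (u.reverse ++ [false, true] ++ v) 0 1)
      (muq (u.reverse ++ [true, false] ++ v) 0 1) := by
  rcases huv with ⟨w, rfl⟩ | ⟨w, rfl⟩
  · exact main1 u w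
  · exact main2 v w
end
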